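/- arXiv:2112.12534 — 6 statements merged into one kernel-verified Lean document; each statement's English description precedes it below -/
import Mathlib

section
/- For every subset S of the infinite rooted binary tree 2^{<ω}, either S or its complement contains a subtree order-isomorphic to 2^{<ω} (with respect to the initial-segment partial order). -/
open Classical

/-- Two prefixes of a common list are comparable. -/
private lemma prefix_comparable {α : Type*} {l s t : List α}
    (hs : s <+: l) (ht : t <+: l) : s <+: t ∨ t <+: s := by
  rcases le_total s.length t.length with h | h
  · exact Or.inl (List.prefix_of_prefix_length_le hs ht h)
  · exact Or.inr (List.prefix_of_prefix_length_le ht hs h)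

/-- If neither list is a prefix of the other, they split at a first disagreement. -/
private lemma split_of_incomparable :
    ∀ (s t : List Bool), ¬ s <+: t → ¬ t <+: s →
      ∃ (u s' t' : List Bool) (a b : Bool), a ≠ b ∧ s = u ++ a :: s' ∧ t = u ++ b :: t'
  | [], t, hs, _ => absurd (List.nil_prefix) hs
  | s, [], _, ht => absurd (List.nil_prefix) ht
  | a :: s, b :: t, hs, ht => by
    by_cases hab : a = b
    · subst hab
      have hs' : ¬ s <+: t := fun h => hs (List.cons_prefix_cons.2 ⟨rfl, h⟩)
      have ht' : ¬ t <+: s := fun h => ht (List.cons_prefix_cons.2 ⟨rfl, h⟩)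
      obtain ⟨u, s', t', c, d, hcd, rfl, rfl⟩ := split_of_incomparable s t hs' ht'
      exact ⟨a :: u, s', t', c, d, hcd, rfl, rfl⟩
    · exact ⟨[], s, t, a, b, hab, rfl, rfl⟩

/-- For every subset `S` of the binary tree `2^{<ω}` (finite 0-1 sequences with the
initial-segment order `<+:`), either `S` or its complement contains a subtree
order-isomorphic to `2^{<ω}`. -/
theorem stmt_0 (S : Set (List Bool)) :
    ∃ f : List Bool → List Bool,
      (∀ s t : List Bool, f s <+: f t ↔ s <+: t) ∧
      (Set.range f ⊆ S ∨ Set.range f ⊆ Sᶜ) := by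
  by_cases hd : ∀ u : List Bool, ∃ v, u <+: v ∧ v ∈ S
  · -- S is dense: build a subtree inside S.
    choose ext hext hmem using hd
    set f : List Bool → List Bool := fun l => l.foldl (fun t b => ext (t ++ [b])) (ext []) with hf
    have hstep : ∀ (l : List Bool) (b : Bool), f (l ++ [b]) = ext (f l ++ [b]) := by
      intro l b; simp [hf, List.foldl_append]
    have hchild : ∀ (l : List Bool) (b : Bool), f l ++ [b] <+: f (l ++ [b]) := by
      intro l b; rw [hstep]; exact hext _
    -- monotonicity
    have hmono : ∀ (s r : List Bool), f s <+: f (s ++ r) := by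
      intro s r
      induction r using List.reverseRecOn with
      | nil => simp
      | append_singleton r b ih =>
        rw [← List.append_assoc]
        exact ih.trans ((List.prefix_append _ _).trans (hchild _ _))
    have hmono' : ∀ {s t : List Bool}, s <+: t → f s <+: f t := by
      rintro s t ⟨r, rfl⟩; exact hmono s r
    -- strict length increase on proper extensions
    have hlen : ∀ (s : List Bool) (c : Bool) (r : List Bool),
        (f s).length < (f (s ++ c :: r)).length := by
      intro s c r
      have h1 : f s ++ [c] <+: f (s ++ [c]) := hchild s c
      have h2 : f (s ++ [c]) <+: f (s ++ c :: r) := by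
        have := hmono (s ++ [c]) r
        rwa [List.append_assoc] at this
        -- s ++ [c] ++ r = s ++ c :: r
      have := (h1.trans h2).length_le
      simpa using lt_of_lt_of_le (by simp) this
    -- incomparable inputs give incomparable outputs
    have hincomp : ∀ {s t : List Bool}, ¬ s <+: t → ¬ t <+: s →
        ¬ f s <+: f t ∧ ¬ f t <+: f s := by
      intro s t hs ht
      obtain ⟨u, s', t', a, b, hab, rfl, rfl⟩ := split_of_incomparable s t hs ht
      have has : f u ++ [a] <+: f (u ++ a :: s') := by
        refine (hchild u a).trans ?_
        have := hmono (u ++ [a]) s'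
        rwa [List.append_assoc] at this
      have hbt : f u ++ [b] <+: f (u ++ b :: t') := by
        refine (hchild u b).trans ?_
        have := hmono (u ++ [b]) t'
        rwa [List.append_assoc] at this
      constructor
      · intro h
        have h1 : f u ++ [a] <+: f (u ++ b :: t') := has.trans h
        have := prefix_comparable h1 hbt
        have heq : f u ++ [a] = f u ++ [b] := by
          rcases this with h' | h'
          · exact h'.eq_of_length (by simp)
          · exact (h'.eq_of_length (by simp)).symm
        exact hab (by simpa using heq)
      · intro h
        have h1 : f u ++ [b] <+: f (u ++ a :: s') := hbt.trans h
        have := prefix_comparable h1 has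
        have heq : f u ++ [b] = f u ++ [a] := by
          rcases this with h' | h'
          · exact h'.eq_of_length (by simp)
          · exact (h'.eq_of_length (by simp)).symm
        exact hab (by simpa using heq.symm)
    refine ⟨f, ?_, Or.inl ?_⟩
    · intro s t
      constructor
      · intro h
        by_contra hst
        by_cases hts : t <+: s
        · obtain ⟨r, rfl⟩ := hts
          cases r with
          | nil => exact hst (by simp)
          | cons c r =>
            have := hlen t c r
            exact absurd h.length_le (by omega)
        · exact (hincomp hst hts).1 h
      · exact hmono'
    · rintro x ⟨l, rfl⟩
      induction l using List.reverseRecOn with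
      | nil => exact hmem []
      | append_singleton l b ih => rw [hstep]; exact hmem _
  · -- some cone avoids S entirely
    push_neg at hd
    obtain ⟨u, hu⟩ := hd
    refine ⟨fun l => u ++ l, ?_, Or.inr ?_⟩
    · intro s t
      constructor
      · rintro ⟨r, hr⟩
        refine ⟨r, List.append_cancel_left (as := u) ?_⟩
        simpa [List.append_assoc] using hr
      · rintro ⟨r, rfl⟩
        exact ⟨r, by simp [List.append_assoc]⟩
    · rintro x ⟨l, rfl⟩
      exact hu (u ++ l) (List.prefix_append u l)
end

section
/- For every subset S of the binary tree 2^{<ω}, either S or 2^{<ω}\S contains a subtree T which is linearly order-isomorphic to 2^{<ω}, i.e., the order isomorphism also preserves the standard linear order (compare first by length, then left-to-right within a level). -/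
/-- The standard linear order on the binary tree: first by length, then
lexicographically (left-to-right) within a level. -/
def stdLt (s t : List Bool) : Prop :=
  s.length < t.length ∨ (s.length = t.length ∧ List.Lex (· < ·) s t)

/-! ### Numeric encoding of tree nodes -/

def encAux (k : ℕ) (s : List Bool) : ℕ := s.foldl (fun n b => 2 * n + cond b 1 0) k

def enc (s : List Bool) : ℕ := encAux 1 s

lemma encAux_cons (k : ℕ) (b : Bool) (s : List Bool) :
    encAux k (b :: s) = encAux (2 * k + cond b 1 0) s := rfl

lemma encAux_append_single (k : ℕ) (s : List Bool) (b : Bool) :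
    encAux k (s ++ [b]) = 2 * encAux k s + cond b 1 0 := by
  simp [encAux, List.foldl_append]

lemma encAux_eq (k : ℕ) (s : List Bool) :
    encAux k s = k * 2 ^ s.length + encAux 0 s := by
  induction s generalizing k with
  | nil => simp [encAux]
  | cons b s ih =>
    rw [encAux_cons, ih, encAux_cons 0, ih (2 * 0 + cond b 1 0)]
    cases b <;> simp [pow_succ] <;> ring

lemma encAux_zero_lt (s : List Bool) : encAux 0 s < 2 ^ s.length := by
  induction s with
  | nil => simp [encAux]
  | cons b s ih =>
    rw [encAux_cons, encAux_eq]
    cases b <;> simp [pow_succ] <;> omega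

lemma enc_bounds (s : List Bool) : 2 ^ s.length ≤ enc s ∧ enc s < 2 ^ (s.length + 1) := by
  have h1 := encAux_eq 1 s
  have h2 := encAux_zero_lt s
  unfold enc
  constructor <;> [omega; (rw [pow_succ]; omega)]

lemma enc_one_le (s : List Bool) : 1 ≤ enc s := by
  have := (enc_bounds s).1
  have : (1:ℕ) ≤ 2 ^ s.length := Nat.one_le_two_pow
  omega

lemma enc_append_single (s : List Bool) (b : Bool) :
    enc (s ++ [b]) = 2 * enc s + cond b 1 0 := encAux_append_single 1 s b

lemma lex_encAux {s t : List Bool} (hl : s.length = t.length)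
    (h : List.Lex (· < ·) s t) : encAux 0 s < encAux 0 t := by
  induction h with
  | nil => simp at hl
  | @rel a s' c t' hac =>
    obtain ⟨rfl, rfl⟩ : a = false ∧ c = true := by simpa [Bool.lt_iff] using hac
    simp only [List.length_cons, Nat.succ_inj] at hl
    rw [encAux_cons, encAux_cons]
    have h1 := encAux_zero_lt s'
    have h2 := encAux_eq 1 t'
    simp only [Nat.mul_zero, Nat.zero_add, cond] at *
    rw [hl] at h1
    omega
  | @cons a s' t' h ih =>
    simp only [List.length_cons, Nat.succ_inj] at hl
    rw [encAux_cons, encAux_cons]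
    have := ih hl
    have h1 := encAux_eq (2 * 0 + cond a 1 0) s'
    have h2 := encAux_eq (2 * 0 + cond a 1 0) t'
    rw [hl] at h1
    omega

lemma lex_trichotomy : ∀ s t : List Bool, s.length = t.length → s ≠ t →
    List.Lex (· < ·) s t ∨ List.Lex (· < ·) t s := by
  intro s
  induction s with
  | nil => intro t hl _; cases t <;> simp_all
  | cons a s ih =>
    intro t hl hne
    cases t with
    | nil => simp at hl
    | cons c t =>
      simp only [List.length_cons, Nat.succ_inj] at hl
      by_cases hac : a = c
      · subst hac
        have : s ≠ t := by rintro rfl; exact hne rfl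
        rcases ih t hl this with h | h
        · exact Or.inl (List.Lex.cons h)
        · exact Or.inr (List.Lex.cons h)
      · cases a <;> cases c <;> simp_all

lemma lex_irrefl : ∀ s : List Bool, ¬ List.Lex (· < ·) s s := by
  intro s
  induction s with
  | nil => intro h; cases h
  | cons a s ih =>
    intro h
    cases h with
    | rel hr => simp [Bool.lt_iff] at hr
    | cons h => exact ih h

lemma stdLt_irrefl' (s : List Bool) : ¬ stdLt s s := by
  rintro (h | ⟨-, h⟩)
  · omega
  · exact lex_irrefl s h

lemma stdLt_imp_enc {s t : List Bool} (h : stdLt s t) : enc s < enc t := by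
  rcases h with h | ⟨hl, h⟩
  · have h1 := (enc_bounds s).2
    have h2 := (enc_bounds t).1
    have : 2 ^ (s.length + 1) ≤ 2 ^ t.length := Nat.pow_le_pow_right (by norm_num) (by omega)
    omega
  · have := lex_encAux hl h
    rw [enc, enc, encAux_eq 1 s, encAux_eq 1 t, hl]
    omega

lemma stdLt_iff_enc (s t : List Bool) : stdLt s t ↔ enc s < enc t := by
  refine ⟨stdLt_imp_enc, fun h => ?_⟩
  by_contra hst
  rcases Nat.lt_trichotomy s.length t.length with hl | hl | hl
  · exact hst (Or.inl hl)
  · by_cases hne : s = t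
    · subst hne; omega
    · rcases lex_trichotomy s t hl hne with hx | hx
      · exact hst (Or.inr ⟨hl, hx⟩)
      · have := stdLt_imp_enc (Or.inr ⟨hl.symm, hx⟩); omega
  · have := stdLt_imp_enc (s := t) (t := s) (Or.inl hl); omega

/-! ### General list lemmas -/

lemma common_split : ∀ s t : List Bool, ¬ s <+: t → ¬ t <+: s →
    ∃ u b, u ++ [b] <+: s ∧ u ++ [!b] <+: t := by
  intro s
  induction s with
  | nil => intro t hs _; exact absurd (List.nil_prefix) hs
  | cons a s ih =>
    intro t hs ht
    cases t with
    | nil => exact absurd (List.nil_prefix) ht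
    | cons c t =>
      by_cases hac : a = c
      · subst hac
        obtain ⟨u, b, h1, h2⟩ := ih t (by simpa using hs) (by simpa using ht)
        exact ⟨a :: u, b, by simpa using h1, by simpa using h2⟩
      · refine ⟨[], a, by simp, ?_⟩
        have hbc : (!a) = c := by cases a <;> cases c <;> revert hac <;> decide
        exact ⟨t, by simp [hbc]⟩

lemma lex_append_left_iff (u : List Bool) (s t : List Bool) :
    List.Lex (· < ·) (u ++ s) (u ++ t) ↔ List.Lex (· < ·) s t := by
  induction u with
  | nil => rfl
  | cons a u ih =>
    simp only [List.cons_append]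
    constructor
    · intro h
      cases h with
      | rel hr => simp [Bool.lt_iff] at hr
      | cons h => exact ih.mp h
    · intro h; exact List.Lex.cons (ih.mpr h)

lemma prefix_append_left_iff (u s t : List Bool) : u ++ s <+: u ++ t ↔ s <+: t := by
  constructor
  · rintro ⟨r, hr⟩
    exact ⟨r, by simpa [List.append_assoc] using hr⟩
  · rintro ⟨r, rfl⟩
    exact ⟨r, by simp⟩

/-! ### The recursive builder for the dense case -/

def build (ch : List Bool → ℕ → List Bool) : ℕ → List Bool
  | 0 => []
  | 1 => ch [] 0
  | (n+2) => ch (build ch ((n+2)/2) ++ [decide ((n+2) % 2 = 1)]) (build ch (n+1)).length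
  decreasing_by
  · exact Nat.div_lt_self (by omega) (by omega)
  · omega

lemma build_eq (ch : List Bool → ℕ → List Bool) (m : ℕ) (hm : 2 ≤ m) :
    build ch m = ch (build ch (m/2) ++ [decide (m % 2 = 1)]) (build ch (m-1)).length := by
  obtain ⟨n, rfl⟩ : ∃ n, m = n + 2 := ⟨m - 2, by omega⟩
  rw [build]
  congr 1

section Dense
variable {S : Set (List Bool)} {ch : List Bool → ℕ → List Bool}
variable (hch : ∀ u N, u <+: ch u N ∧ ch u N ∈ S ∧ N < (ch u N).length)

include hch

lemma build_len_lt (n : ℕ) : (build ch n).length < (build ch (n+1)).length := by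
  cases n with
  | zero =>
    rw [show (0:ℕ)+1 = 1 from rfl, build, build]
    exact (hch [] 0).2.2
  | succ n =>
    rw [build_eq ch (n+2) (by omega)]
    simpa using (hch _ _).2.2

lemma build_len_mono : StrictMono (fun n => (build ch n).length) :=
  strictMono_nat_of_lt_succ (build_len_lt hch)

lemma build_mem (n : ℕ) (hn : 1 ≤ n) : build ch n ∈ S := by
  rcases Nat.lt_or_ge n 2 with h | h
  · obtain rfl : n = 1 := by omega
    rw [build]; exact (hch [] 0).2.1
  · rw [build_eq ch n h]; exact (hch _ _).2.1

/-- The key step: the image of a child extends the image of the parent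
followed by the corresponding bit. -/
lemma build_step (u : List Bool) (b : Bool) :
    build ch (enc u) ++ [b] <+: build ch (enc (u ++ [b])) := by
  have h1 := enc_one_le u
  rw [enc_append_single u b]
  have hdiv : (2 * enc u + cond b 1 0) / 2 = enc u := by
    cases b <;> simp only [Bool.cond_false, Bool.cond_true] <;> omega
  have hmod : decide ((2 * enc u + cond b 1 0) % 2 = 1) = b := by
    have h2 : (2 * enc u) % 2 = 0 := by omega
    cases b <;> simp only [Bool.cond_false, Bool.cond_true, Nat.add_zero] <;>
      simp [Nat.add_mod, h2]
  have hm : 2 ≤ 2 * enc u + cond b 1 0 := by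
    cases b <;> simp only [Bool.cond_false, Bool.cond_true] <;> omega
  rw [build_eq ch (2 * enc u + cond b 1 0) hm, hdiv, hmod]
  exact (hch _ _).1

lemma build_mono {s t : List Bool} (h : s <+: t) :
    build ch (enc s) <+: build ch (enc t) := by
  obtain ⟨r, rfl⟩ := h
  induction r using List.reverseRecOn with
  | nil => simp
  | append_singleton r b ih =>
    rw [← List.append_assoc]
    exact ih.trans ((List.prefix_append _ _).trans (build_step hch (s ++ r) b))

end Dense

lemma dense_case (S : Set (List Bool))
    (hd : ∀ u : List Bool, ∃ v, u <+: v ∧ v ∈ S) :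
    ∃ f : List Bool → List Bool,
      (∀ s t : List Bool, f s <+: f t ↔ s <+: t) ∧
      (∀ s t : List Bool, stdLt (f s) (f t) ↔ stdLt s t) ∧
      Set.range f ⊆ S := by
  -- upgrade density to arbitrarily long extensions
  have hd' : ∀ (u : List Bool) (N : ℕ), ∃ v, u <+: v ∧ v ∈ S ∧ N < v.length := by
    intro u N
    obtain ⟨v, hv1, hv2⟩ := hd (u ++ List.replicate (N + 1) false)
    refine ⟨v, (List.prefix_append _ _).trans hv1, hv2, ?_⟩
    have := hv1.length_le
    simp at this
    omega
  choose ch hch1 hch2 hch3 using hd'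
  have hch : ∀ u N, u <+: ch u N ∧ ch u N ∈ S ∧ N < (ch u N).length :=
    fun u N => ⟨hch1 u N, hch2 u N, hch3 u N⟩
  set f : List Bool → List Bool := fun s => build ch (enc s) with hf
  have hlen : ∀ {s t : List Bool}, enc s < enc t → (f s).length < (f t).length :=
    fun h => build_len_mono hch h
  refine ⟨f, ?_, ?_, ?_⟩
  · -- prefix iff
    intro s t
    constructor
    · intro h
      by_contra hst
      by_cases hts : t <+: s
      · -- t is a proper prefix of s
        have hne : t ≠ s := by rintro rfl; exact hst hts
        have hlt : t.length < s.length := lt_of_le_of_ne hts.length_le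
          (fun hl => hne (hts.sublist.eq_of_length hl))
        have : (f t).length < (f s).length := hlen (stdLt_imp_enc (Or.inl hlt))
        have := h.length_le
        omega
      · -- incomparable
        obtain ⟨u, b, h1, h2⟩ := common_split s t hst hts
        have hb1 : f u ++ [b] <+: f t :=
          ((build_step hch u b).trans (build_mono hch h1)).trans h
        have hb2 : f u ++ [!b] <+: f t :=
          (build_step hch u (!b)).trans (build_mono hch h2)
        have : f u ++ [b] = f u ++ [!b] :=
          (List.prefix_of_prefix_length_le hb1 hb2 (by simp)).sublist.eq_of_length (by simp)
        simp at this
    · exact build_mono hch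
  · -- stdLt iff
    intro s t
    constructor
    · intro h
      by_contra hst
      by_cases hne : s = t
      · subst hne; exact stdLt_irrefl' (f s) h
      · have hts : stdLt t s := by
          rcases Nat.lt_trichotomy s.length t.length with hl | hl | hl
          · exact absurd (Or.inl hl) hst
          · rcases lex_trichotomy s t hl hne with hx | hx
            · exact absurd (Or.inr ⟨hl, hx⟩) hst
            · exact Or.inr ⟨hl.symm, hx⟩
          · exact Or.inl hl
        have h1 : (f t).length < (f s).length := hlen (stdLt_imp_enc hts)
        rcases h with h | ⟨h, -⟩ <;> omega
    · intro h
      exact Or.inl (hlen (stdLt_imp_enc h))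
  · rintro x ⟨s, rfl⟩
    exact build_mem hch (enc s) (enc_one_le s)

/-- For every subset `S` of the binary tree, either `S` or its complement contains a
subtree that is order-isomorphic to the binary tree for the initial-segment order and
whose order isomorphism also preserves the standard linear order. -/
theorem stmt_1 (S : Set (List Bool)) :
    ∃ f : List Bool → List Bool,
      (∀ s t : List Bool, f s <+: f t ↔ s <+: t) ∧
      (∀ s t : List Bool, stdLt (f s) (f t) ↔ stdLt s t) ∧
      (Set.range f ⊆ S ∨ Set.range f ⊆ Sᶜ) := by
  by_cases hd : ∀ u : List Bool, ∃ v, u <+: v ∧ v ∈ S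
  · obtain ⟨f, h1, h2, h3⟩ := dense_case S hd
    exact ⟨f, h1, h2, Or.inl h3⟩
  · push_neg at hd
    obtain ⟨u0, hu0⟩ := hd
    refine ⟨fun s => u0 ++ s, ?_, ?_, Or.inr ?_⟩
    · intro s t; exact prefix_append_left_iff u0 s t
    · intro s t
      unfold stdLt
      simp only [List.length_append, lex_append_left_iff]
      constructor <;> rintro (h | ⟨h, hx⟩)
      · exact Or.inl (by omega)
      · exact Or.inr ⟨by omega, hx⟩
      · exact Or.inl (by omega)
      · exact Or.inr ⟨by omega, hx⟩
    · rintro x ⟨s, rfl⟩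
      exact hu0 (u0 ++ s) (List.prefix_append _ _)
end

section
/- Let X be a Banach space such that M_X = {T ∈ B(X) : I_X ≠ A T B for all A, B ∈ B(X)} is closed under addition. Then for every bounded projection P on X, either I_X factors through P or I_X factors through I_X − P; consequently either the range of P or the range of I_X − P contains a complemented subspace isomorphic to X. -/
/-- Auxiliary: if `P` is idempotent and `A ∘ P ∘ B = 1`, then `Q = (P∘B)∘(A∘P)`
is an idempotent with range inside `range P` and range isomorphic to `X`. -/
lemma aux_factor (X : Type*) [NormedAddCommGroup X] [NormedSpace ℝ X]
    (P : X →L[ℝ] X) (hP : P ∘L P = P)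
    (A B : X →L[ℝ] X) (hAB : A ∘L P ∘L B = 1) :
    ∃ Q : X →L[ℝ] X, Q ∘L Q = Q ∧
      Nonempty ((LinearMap.range (Q : X →ₗ[ℝ] X)) ≃L[ℝ] X) ∧
      LinearMap.range (Q : X →ₗ[ℝ] X) ≤ LinearMap.range (P : X →ₗ[ℝ] X) := by
  have hPx : ∀ x, P (P x) = P x := fun x => congrArg (· x) hP
  have hABx : ∀ x, A (P (B x)) = x := fun x => congrArg (· x) hAB
  set u : X →L[ℝ] X := P ∘L B with hu
  set v : X →L[ℝ] X := A ∘L P with hv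
  have hvux : ∀ x, v (u x) = x := by
    intro x
    show A (P (P (B x))) = x
    rw [hPx]; exact hABx x
  set Q : X →L[ℝ] X := u ∘L v with hQ
  have hQx : ∀ x, Q x = u (v x) := fun _ => rfl
  have hQQ : Q ∘L Q = Q := by
    ext x
    show u (v (u (v x))) = u (v x)
    rw [hvux]
  refine ⟨Q, hQQ, ?_, ?_⟩
  · have hmem : ∀ x : X, u x ∈ LinearMap.range (Q : X →ₗ[ℝ] X) := by
      intro x
      exact ⟨u x, by show Q (u x) = u x; rw [hQx, hvux]⟩
    refine ⟨ContinuousLinearEquiv.equivOfInverse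
      (v.comp (LinearMap.range (Q : X →ₗ[ℝ] X)).subtypeL)
      (u.codRestrict (LinearMap.range (Q : X →ₗ[ℝ] X)) hmem) ?_ ?_⟩
    · rintro ⟨_, y, rfl⟩
      ext
      show u (v (Q y)) = Q y
      rw [hQx, hvux]
    · intro x
      exact hvux x
  · rintro _ ⟨x, rfl⟩
    exact ⟨B (v x), rfl⟩

/-- If `M_X = {T : I_X ≠ ATB}` is closed under addition, then for every bounded
projection `P` on `X` the identity factors through `P` or through `I - P`, and
consequently the range of `P` or of `I - P` contains a complemented subspace
isomorphic to `X`. -/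
theorem stmt_6 (X : Type*) [NormedAddCommGroup X] [NormedSpace ℝ X] [CompleteSpace X]
    (hM : ∀ T S : X →L[ℝ] X, (∀ A B : X →L[ℝ] X, A ∘L T ∘L B ≠ 1) →
      (∀ A B : X →L[ℝ] X, A ∘L S ∘L B ≠ 1) →
      (∀ A B : X →L[ℝ] X, A ∘L (T + S) ∘L B ≠ 1))
    (P : X →L[ℝ] X) (hP : P ∘L P = P) :
    ((∃ A B : X →L[ℝ] X, A ∘L P ∘L B = 1) ∨
      (∃ A B : X →L[ℝ] X, A ∘L (1 - P) ∘L B = 1)) ∧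
    (∃ Q : X →L[ℝ] X, Q ∘L Q = Q ∧
      Nonempty ((LinearMap.range (Q : X →ₗ[ℝ] X)) ≃L[ℝ] X) ∧
      (LinearMap.range (Q : X →ₗ[ℝ] X) ≤ LinearMap.range (P : X →ₗ[ℝ] X) ∨
        LinearMap.range (Q : X →ₗ[ℝ] X) ≤ LinearMap.range ((1 - P : X →L[ℝ] X) : X →ₗ[ℝ] X))) := by
  have hor : (∃ A B : X →L[ℝ] X, A ∘L P ∘L B = 1) ∨
      (∃ A B : X →L[ℝ] X, A ∘L (1 - P) ∘L B = 1) := by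
    by_contra h
    push_neg at h
    obtain ⟨h1, h2⟩ := h
    have := hM P (1 - P) (fun A B => h1 A B) (fun A B => h2 A B) 1 1
    apply this
    have hsum : P + (1 - P) = 1 := by abel
    rw [hsum]
    rfl
  have hPx : ∀ x, P (P x) = P x := fun x => congrArg (· x) hP
  have hP' : (1 - P) ∘L (1 - P) = 1 - P := by
    ext x
    show (1 - P) ((1 - P) x) = (1 - P) x
    simp [hPx x]
  refine ⟨hor, ?_⟩
  rcases hor with ⟨A, B, hAB⟩ | ⟨A, B, hAB⟩
  · obtain ⟨Q, h1, h2, h3⟩ := aux_factor X P hP A B hAB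
    exact ⟨Q, h1, h2, Or.inl h3⟩
  · obtain ⟨Q, h1, h2, h3⟩ := aux_factor X (1 - P) hP' A B hAB
    exact ⟨Q, h1, h2, Or.inr h3⟩
end

section
/- Let X be a Banach space isomorphic to its ℓ^p-sum ℓ^p(X) (1 ≤ p ≤ ∞, or the c₀-sum), and suppose that for every bounded projection P on X, either the range of P or the range of I − P contains a complemented copy of X. Then X is primary: whenever X ≅ W ⊕ V, one of W, V is isomorphic to X. -/
open ENNReal

variable {p : ℝ≥0∞}

section tools
variable {α β : Type*} {E : α → Type*} {F : β → Type*}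
    [∀ i, NormedAddCommGroup (E i)] [∀ j, NormedAddCommGroup (F j)] [Fact (1 ≤ p)]

/-- Membership in `ℓ^p` by domination along an injective index map. -/
theorem memA {f : ∀ i, E i} (hf : Memℓp f p) (g : ∀ j, F j) (m : β → α)
    (hm : Function.Injective m) {C : ℝ} (hC : 0 ≤ C)
    (h : ∀ j, ‖g j‖ ≤ C * ‖f (m j)‖) : Memℓp g p := by
  rcases p.dichotomy with rfl | hq
  · apply memℓp_infty
    obtain ⟨M, hM⟩ := hf.bddAbove
    refine ⟨C * M, ?_⟩
    rintro - ⟨j, rfl⟩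
    exact (h j).trans (mul_le_mul_of_nonneg_left (hM ⟨m j, rfl⟩) hC)
  · have hq0 : 0 < p.toReal := zero_lt_one.trans_le hq
    apply memℓp_gen
    have hsum := hf.summable hq0
    have h2 : Summable fun j => (C * ‖f (m j)‖) ^ p.toReal := by
      have := (hsum.comp_injective hm).mul_left (C ^ p.toReal)
      refine this.congr fun j => ?_
      simp [Function.comp, Real.mul_rpow hC (norm_nonneg _)]
    exact h2.of_nonneg_of_le (fun j => Real.rpow_nonneg (norm_nonneg _) _)
      (fun j => Real.rpow_le_rpow (norm_nonneg _) (h j) hq0.le)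

/-- Norm bound in `ℓ^p` by domination along an injective index map. -/
theorem normB (f : lp E p) (g : lp F p) (m : β → α) (hm : Function.Injective m)
    {C : ℝ} (hC : 0 ≤ C) (h : ∀ j, ‖g j‖ ≤ C * ‖f (m j)‖) :
    ‖g‖ ≤ C * ‖f‖ := by
  rcases p.dichotomy with rfl | hq
  · apply lp.norm_le_of_forall_le (mul_nonneg hC (norm_nonneg f))
    intro j
    exact (h j).trans (mul_le_mul_of_nonneg_left
      (lp.norm_apply_le_norm (by norm_num) f (m j)) hC)
  · classical
    have hq0 : 0 < p.toReal := zero_lt_one.trans_le hq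
    apply lp.norm_le_of_forall_sum_le hq0 (mul_nonneg hC (norm_nonneg f))
    intro s
    calc ∑ j ∈ s, ‖g j‖ ^ p.toReal
        ≤ ∑ j ∈ s, (C * ‖f (m j)‖) ^ p.toReal :=
          Finset.sum_le_sum fun j _ => Real.rpow_le_rpow (norm_nonneg _) (h j) hq0.le
      _ = ∑ j ∈ s, C ^ p.toReal * ‖f (m j)‖ ^ p.toReal := by
          simp_rw [Real.mul_rpow hC (norm_nonneg _)]
      _ = C ^ p.toReal * ∑ j ∈ s, ‖f (m j)‖ ^ p.toReal := by rw [Finset.mul_sum]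
      _ = C ^ p.toReal * ∑ i ∈ s.image m, ‖f i‖ ^ p.toReal := by
          rw [Finset.sum_image (fun a _ b _ hab => hm hab)]
      _ ≤ C ^ p.toReal * ‖f‖ ^ p.toReal := by
          refine mul_le_mul_of_nonneg_left ?_ (Real.rpow_nonneg hC _)
          exact sum_le_hasSum _ (fun i _ => Real.rpow_nonneg (norm_nonneg _) _)
            (lp.hasSum_norm hq0 f)
      _ = (C * ‖f‖) ^ p.toReal := (Real.mul_rpow hC (norm_nonneg _)).symm

/-- Prepending an element preserves membership in `ℓ^p`. -/
theorem memCons {A : Type*} [NormedAddCommGroup A] (a : A) {f : ∀ _ : ℕ, A}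
    (hf : Memℓp f p) :
    Memℓp (fun n => if n = 0 then a else f (n - 1) : ∀ _ : ℕ, A) p := by
  rcases p.dichotomy with rfl | hq
  · apply memℓp_infty
    obtain ⟨M, hM⟩ := hf.bddAbove
    refine ⟨max ‖a‖ M, ?_⟩
    rintro - ⟨j, rfl⟩
    cases j with
    | zero => simpa using le_max_left _ _
    | succ k => simpa using le_trans (hM ⟨k, rfl⟩) (le_max_right _ _)
  · have hq0 : 0 < p.toReal := zero_lt_one.trans_le hq
    apply memℓp_gen
    refine (summable_nat_add_iff 1).mp ?_
    simpa using hf.summable hq0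

end tools

universe u

section lpequivs
variable [Fact (1 ≤ p)]
variable {A B : Type*} [NormedAddCommGroup A] [NormedSpace ℝ A] [CompleteSpace A]
  [NormedAddCommGroup B] [NormedSpace ℝ B] [CompleteSpace B]

/-- Coordinatewise application of a continuous linear equivalence on `ℓ^p`, linear version. -/
noncomputable def lpCongrL (e : A ≃L[ℝ] B) :
    lp (fun _ : ℕ => A) p ≃ₗ[ℝ] lp (fun _ : ℕ => B) p where
  toFun f := ⟨fun n => e (f n),
    memA (lp.memℓp f) _ id Function.injective_id (norm_nonneg (e : A →L[ℝ] B))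
      (fun j => (e : A →L[ℝ] B).le_opNorm (f j))⟩
  invFun g := ⟨fun n => e.symm (g n),
    memA (lp.memℓp g) _ id Function.injective_id (norm_nonneg (e.symm : B →L[ℝ] A))
      (fun j => (e.symm : B →L[ℝ] A).le_opNorm (g j))⟩
  map_add' f g := by ext n; simp; rfl
  map_smul' c f := by ext n; simp
  left_inv f := by ext n; simp
  right_inv g := by ext n; simp

set_option maxHeartbeats 1000000 in
/-- Coordinatewise application of a continuous linear equivalence on `ℓ^p`. -/
noncomputable def lpCongr (e : A ≃L[ℝ] B) :
    lp (fun _ : ℕ => A) p ≃L[ℝ] lp (fun _ : ℕ => B) p :=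
  (lpCongrL e).toContinuousLinearEquivOfContinuous <|
    AddMonoidHomClass.continuous_of_bound (lpCongrL (p := p) e).toLinearMap
      ‖(e : A →L[ℝ] B)‖
      (fun f => normB f ((lpCongrL e) f) id Function.injective_id
        (norm_nonneg (e : A →L[ℝ] B)) (fun j => (e : A →L[ℝ] B).le_opNorm (f j)))

/-- `ℓ^p` of a product splits as a product of `ℓ^p` spaces, linear version. -/
noncomputable def lpSplitL :
    lp (fun _ : ℕ => A × B) p ≃ₗ[ℝ] lp (fun _ : ℕ => A) p × lp (fun _ : ℕ => B) p where
  toFun f :=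
    (⟨fun n => (f n).1, memA (lp.memℓp f) _ id Function.injective_id zero_le_one
        (fun j => by simpa using norm_fst_le (f j))⟩,
     ⟨fun n => (f n).2, memA (lp.memℓp f) _ id Function.injective_id zero_le_one
        (fun j => by simpa using norm_snd_le (f j))⟩)
  invFun g := ⟨fun n => (g.1 n, g.2 n), by
    have h1 : Memℓp (fun n => ((g.1 n : A), (0 : B)) : ∀ _ : ℕ, A × B) p :=
      memA (lp.memℓp g.1) _ id Function.injective_id zero_le_one
        (fun j => by simp [Prod.norm_def])
    have h2 : Memℓp (fun n => ((0 : A), (g.2 n : B)) : ∀ _ : ℕ, A × B) p :=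
      memA (lp.memℓp g.2) _ id Function.injective_id zero_le_one
        (fun j => by simp [Prod.norm_def])
    have heq : (fun n => ((g.1 n : A), (g.2 n : B)) : ∀ _ : ℕ, A × B)
        = (fun n => ((g.1 n : A), (0 : B))) + (fun n => ((0 : A), (g.2 n : B))) := by
      funext n
      simp
    show Memℓp (fun n => ((g.1 n : A), (g.2 n : B)) : ∀ _ : ℕ, A × B) p
    rw [heq]
    exact h1.add h2⟩
  map_add' f g := by
    refine Prod.ext ?_ ?_ <;> · ext n; simp; rfl
  map_smul' c f := by
    refine Prod.ext ?_ ?_ <;> · ext n; simp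
  left_inv f := by ext n <;> simp
  right_inv g := by
    refine Prod.ext ?_ ?_ <;> · ext n; simp

set_option maxHeartbeats 1000000 in
/-- `ℓ^p` of a product splits as a product of `ℓ^p` spaces. -/
noncomputable def lpSplit :
    lp (fun _ : ℕ => A × B) p ≃L[ℝ] lp (fun _ : ℕ => A) p × lp (fun _ : ℕ => B) p :=
  (lpSplitL (p := p) (A := A) (B := B)).toContinuousLinearEquivOfContinuous <| by
    refine AddMonoidHomClass.continuous_of_bound
      (lpSplitL (p := p) (A := A) (B := B)).toLinearMap 1 (fun f => ?_)
    rw [Prod.norm_def, one_mul]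
    refine max_le ?_ ?_
    · refine le_of_le_of_eq (normB f _ id Function.injective_id zero_le_one
        (fun j => ?_)) (one_mul _)
      · rw [one_mul]; exact norm_fst_le (f j)
    · refine le_of_le_of_eq (normB f _ id Function.injective_id zero_le_one
        (fun j => ?_)) (one_mul _)
      · rw [one_mul]; exact norm_snd_le (f j)

set_option maxHeartbeats 1000000 in
/-- The shift, linear version. -/
noncomputable def lpShiftL :
    lp (fun _ : ℕ => A) p ≃ₗ[ℝ] A × lp (fun _ : ℕ => A) p where
  toFun f := (f 0,
    ⟨fun n => f (n + 1), memA (lp.memℓp f) _ (fun n => n + 1)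
      (add_left_injective 1) zero_le_one (fun j => (one_mul _).symm.le)⟩)
  invFun g := ⟨fun n => if n = 0 then g.1 else g.2 (n - 1),
    memCons g.1 (lp.memℓp g.2)⟩
  map_add' f g := by
    refine Prod.ext (by simp) ?_
    ext n; simp; rfl
  map_smul' c f := by
    refine Prod.ext (by simp) ?_
    ext n; simp
  left_inv f := by
    ext n
    cases n with
    | zero => simp
    | succ k => simp
  right_inv g := by
    refine Prod.ext (by simp) ?_
    ext n; simp

set_option maxHeartbeats 1000000 in
/-- The shift: `ℓ^p(ℕ, A) ≃ A × ℓ^p(ℕ, A)`. -/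
noncomputable def lpShift :
    lp (fun _ : ℕ => A) p ≃L[ℝ] A × lp (fun _ : ℕ => A) p :=
  (lpShiftL (p := p) (A := A)).toContinuousLinearEquivOfContinuous <| by
    have hp0 : p ≠ 0 := (zero_lt_one.trans_le (Fact.out : 1 ≤ p)).ne'
    refine AddMonoidHomClass.continuous_of_bound
      (lpShiftL (p := p) (A := A)).toLinearMap 1 (fun f => ?_)
    rw [Prod.norm_def, one_mul]
    refine max_le (lp.norm_apply_le_norm hp0 f 0) ?_
    refine le_of_le_of_eq (normB f _ (fun n => n + 1)
      (add_left_injective 1) zero_le_one (fun j => (one_mul _).symm.le)) (one_mul _)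

/-- Associativity of products as a continuous linear equivalence. -/
noncomputable def cleAssoc (A B C : Type u) [NormedAddCommGroup A] [NormedSpace ℝ A]
    [NormedAddCommGroup B] [NormedSpace ℝ B] [NormedAddCommGroup C] [NormedSpace ℝ C] :
    ((A × B) × C) ≃L[ℝ] A × (B × C) :=
  (LinearIsometryEquiv.prodAssoc ℝ A B C).toContinuousLinearEquiv

end lpequivs

section proj
variable {X : Type*} [NormedAddCommGroup X] [NormedSpace ℝ X]

theorem idemApply (P : X →L[ℝ] X) (hP : P ∘L P = P) (x : X) : P (P x) = P x :=
  DFunLike.congr_fun hP x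

theorem fixRange (P : X →L[ℝ] X) (hP : P ∘L P = P) {x : X}
    (hx : x ∈ LinearMap.range (P : X →ₗ[ℝ] X)) : P x = x := by
  obtain ⟨y, rfl⟩ := hx
  exact DFunLike.congr_fun hP y

theorem idemCompl (P : X →L[ℝ] X) (hP : P ∘L P = P) : (1 - P) ∘L (1 - P) = 1 - P := by
  ext x
  simp [ContinuousLinearMap.sub_apply, map_sub, idemApply P hP x]

theorem rangeClosed (P : X →L[ℝ] X) (hP : P ∘L P = P) :
    IsClosed (LinearMap.range (P : X →ₗ[ℝ] X) : Set X) := by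
  have h : (LinearMap.range (P : X →ₗ[ℝ] X) : Set X) = {x | (1 - P) x = 0} := by
    ext x
    constructor
    · intro hx
      simp [ContinuousLinearMap.sub_apply, fixRange P hP hx]
    · intro hx
      simp only [Set.mem_setOf_eq, ContinuousLinearMap.sub_apply,
        ContinuousLinearMap.one_apply, sub_eq_zero] at hx
      exact ⟨x, hx.symm⟩
  rw [h]
  exact isClosed_eq (1 - P).continuous continuous_const

/-- Decomposition of a Banach space along a projection. -/
noncomputable def projEquiv (P : X →L[ℝ] X) (hP : P ∘L P = P) :
    X ≃L[ℝ] LinearMap.range (P : X →ₗ[ℝ] X) × LinearMap.range ((1 - P : X →L[ℝ] X) : X →ₗ[ℝ] X) :=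
  { toFun := fun x => (⟨P x, ⟨x, rfl⟩⟩, ⟨(1 - P) x, ⟨x, rfl⟩⟩)
    invFun := fun u => (u.1 : X) + (u.2 : X)
    map_add' := fun x y => by
      refine Prod.ext (Subtype.ext (by show P (x + y) = P x + P y; exact map_add P x y))
        (Subtype.ext (by show (1 - P) (x + y) = (1 - P) x + (1 - P) y; exact map_add (1 - P) x y))
    map_smul' := fun c x => by
      refine Prod.ext (Subtype.ext (by show P (c • x) = c • P x; exact map_smul P c x))
        (Subtype.ext (by show (1 - P) (c • x) = c • (1 - P) x; exact map_smul (1 - P) c x))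
    left_inv := fun x => by simp [ContinuousLinearMap.sub_apply]
    right_inv := fun u => by
      obtain ⟨⟨u, hu⟩, ⟨v, hv⟩⟩ := u
      have hPu : P u = u := fixRange P hP hu
      have hPv : P v = 0 := by
        obtain ⟨y, rfl⟩ := hv
        simp [ContinuousLinearMap.sub_apply, map_sub, idemApply P hP y]
      refine Prod.ext (Subtype.ext ?_) (Subtype.ext ?_)
      · simp [map_add, hPu, hPv]
      · simp [ContinuousLinearMap.sub_apply, map_add, hPu, hPv]
    continuous_toFun := by
      exact (P.continuous.subtype_mk _).prodMk ((1 - P).continuous.subtype_mk _)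
    continuous_invFun := by
      exact (continuous_subtype_val.comp continuous_fst).add
        (continuous_subtype_val.comp continuous_snd) }

/-- Decomposition of the range of a projection along a smaller projection. -/
noncomputable def decomp (P Q : X →L[ℝ] X) (hP : P ∘L P = P) (hQ : Q ∘L Q = Q)
    (hle : LinearMap.range (Q : X →ₗ[ℝ] X) ≤ LinearMap.range (P : X →ₗ[ℝ] X)) :
    (LinearMap.range (P : X →ₗ[ℝ] X)) ≃L[ℝ]
      LinearMap.range (Q : X →ₗ[ℝ] X) × (LinearMap.range (P : X →ₗ[ℝ] X) ⊓ LinearMap.ker ((Q ∘L P : X →L[ℝ] X) : X →ₗ[ℝ] X) : Submodule ℝ X) :=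
  { toFun := fun w => (⟨Q w, ⟨(w : X), rfl⟩⟩,
      ⟨(w : X) - Q w, by
        refine Submodule.mem_inf.mpr ⟨sub_mem w.2 (hle ⟨(w : X), rfl⟩), ?_⟩
        have h1 : P ((w : X) - Q w) = (w : X) - Q w :=
          fixRange P hP (sub_mem w.2 (hle ⟨(w : X), rfl⟩))
        simp only [LinearMap.mem_ker, ContinuousLinearMap.coe_comp',
          Function.comp_apply, h1]
        simp [map_sub, idemApply Q hQ (w : X), fixRange P hP w.2, (fixRange P hP (hle ⟨(w : X), rfl⟩) : P (Q w) = Q w)]⟩)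
    invFun := fun u => ⟨(u.1 : X) + (u.2 : X),
      add_mem (hle u.1.2) (Submodule.mem_inf.mp u.2.2).1⟩
    map_add' := fun x y => by
      refine Prod.ext (Subtype.ext (by show Q ((x + y : LinearMap.range (P : X →ₗ[ℝ] X)) : X) = Q x + Q y; rw [Submodule.coe_add, map_add]))
        (Subtype.ext (by show ((x + y : LinearMap.range (P : X →ₗ[ℝ] X)) : X) - Q ((x + y : LinearMap.range (P : X →ₗ[ℝ] X)) : X) = ((x : X) - Q x) + ((y : X) - Q y); rw [Submodule.coe_add, map_add]; abel))
    map_smul' := fun c x => by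
      refine Prod.ext (Subtype.ext (by show Q ((c • x : LinearMap.range (P : X →ₗ[ℝ] X)) : X) = c • Q x; rw [Submodule.coe_smul, map_smul]))
        (Subtype.ext (by show ((c • x : LinearMap.range (P : X →ₗ[ℝ] X)) : X) - Q ((c • x : LinearMap.range (P : X →ₗ[ℝ] X)) : X) = c • ((x : X) - Q x); rw [Submodule.coe_smul, map_smul, smul_sub]))
    left_inv := fun w => by
      apply Subtype.ext
      simp
    right_inv := fun u => by
      obtain ⟨⟨u, hu⟩, ⟨v, hv⟩⟩ := u
      obtain ⟨hvP, hvK⟩ := Submodule.mem_inf.mp hv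
      have hQu : Q u = u := fixRange Q hQ hu
      have hPv : P v = v := fixRange P hP hvP
      have hQv : Q v = 0 := by
        have := LinearMap.mem_ker.mp hvK
        simpa [hPv] using this
      refine Prod.ext (Subtype.ext ?_) (Subtype.ext ?_)
      · simp [map_add, hQu, hQv]
      · simp [map_add, hQu, hQv]
    continuous_toFun := by
      exact ((Q.continuous.comp continuous_subtype_val).subtype_mk _).prodMk
        ((continuous_subtype_val.sub (Q.continuous.comp continuous_subtype_val)).subtype_mk _)
    continuous_invFun := by
      exact ((continuous_subtype_val.comp continuous_fst).add
        (continuous_subtype_val.comp continuous_snd)).subtype_mk _ }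

end proj

set_option maxHeartbeats 1000000 in
theorem helper {X : Type*} [NormedAddCommGroup X] [NormedSpace ℝ X] [CompleteSpace X]
    [Fact (1 ≤ p)] (hiso : Nonempty (X ≃L[ℝ] lp (fun _ : ℕ => X) p))
    (P : X →L[ℝ] X) (hP : P ∘L P = P) (Q : X →L[ℝ] X) (hQ : Q ∘L Q = Q)
    (hQiso : Nonempty ((LinearMap.range (Q : X →ₗ[ℝ] X)) ≃L[ℝ] X))
    (hle : LinearMap.range (Q : X →ₗ[ℝ] X) ≤ LinearMap.range (P : X →ₗ[ℝ] X)) :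
    Nonempty ((LinearMap.range (P : X →ₗ[ℝ] X)) ≃L[ℝ] X) := by
  obtain ⟨h0⟩ := hiso
  obtain ⟨eQ⟩ := hQiso
  haveI : CompleteSpace (LinearMap.range (P : X →ₗ[ℝ] X)) := (rangeClosed P hP).completeSpace_coe
  haveI : CompleteSpace (LinearMap.range ((1 - P : X →L[ℝ] X) : X →ₗ[ℝ] X)) :=
    (rangeClosed (1 - P) (idemCompl P hP)).completeSpace_coe
  haveI : CompleteSpace
      ((LinearMap.range (P : X →ₗ[ℝ] X) ⊓ LinearMap.ker ((Q ∘L P : X →L[ℝ] X) : X →ₗ[ℝ] X) : Submodule ℝ X)) := by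
    refine IsClosed.completeSpace_coe (hs := ?_)
    have : ((LinearMap.range (P : X →ₗ[ℝ] X) ⊓ LinearMap.ker ((Q ∘L P : X →L[ℝ] X) : X →ₗ[ℝ] X) : Submodule ℝ X) : Set X)
        = (LinearMap.range (P : X →ₗ[ℝ] X) : Set X) ∩ (LinearMap.ker ((Q ∘L P : X →L[ℝ] X) : X →ₗ[ℝ] X) : Set X) := rfl
    rw [this]
    exact (rangeClosed P hP).inter (ContinuousLinearMap.isClosed_ker (Q ∘L P))
  set W := LinearMap.range (P : X →ₗ[ℝ] X)
  set V := LinearMap.range ((1 - P : X →L[ℝ] X) : X →ₗ[ℝ] X)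
  set E := (LinearMap.range (P : X →ₗ[ℝ] X) ⊓ LinearMap.ker ((Q ∘L P : X →L[ℝ] X) : X →ₗ[ℝ] X) : Submodule ℝ X)
  let e0 : X ≃L[ℝ] W × V := projEquiv P hP
  let e1 : W ≃L[ℝ] LinearMap.range (Q : X →ₗ[ℝ] X) × E := decomp P Q hP hQ hle
  let eW : W ≃L[ℝ] X × E := e1.trans (eQ.prodCongr (ContinuousLinearEquiv.refl ℝ E))
  let eXX : X ≃L[ℝ] X × X :=
    h0.trans ((lpShift (p := p) (A := X)).trans
      ((ContinuousLinearEquiv.refl ℝ X).prodCongr h0.symm))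
  let eWXW : W ≃L[ℝ] X × W :=
    eW.trans ((eXX.prodCongr (ContinuousLinearEquiv.refl ℝ E)).trans
      ((cleAssoc X X E).trans ((ContinuousLinearEquiv.refl ℝ X).prodCongr eW.symm)))
  let main : X ≃L[ℝ] W :=
    h0.trans <| (lpCongr (p := p) e0).trans <| (lpSplit (p := p)).trans <|
      ((lpShift (p := p)).prodCongr
        (ContinuousLinearEquiv.refl ℝ (lp (fun _ : ℕ => V) p))).trans <|
      (cleAssoc W (lp (fun _ : ℕ => W) p) (lp (fun _ : ℕ => V) p)).trans <|
      ((ContinuousLinearEquiv.refl ℝ W).prodCongr (lpSplit (p := p)).symm).trans <|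
      ((ContinuousLinearEquiv.refl ℝ W).prodCongr (lpCongr (p := p) e0).symm).trans <|
      ((ContinuousLinearEquiv.refl ℝ W).prodCongr h0.symm).trans <|
      (ContinuousLinearEquiv.prodComm ℝ W X).trans eWXW.symm
  exact ⟨main.symm⟩

/-- Pełczyński decomposition: if `X` is isomorphic to its `ℓ^p`-sum and for every
bounded projection `P` either the range of `P` or the range of `I - P` contains a
complemented copy of `X`, then `X` is primary. -/
theorem stmt_7 (X : Type*) [NormedAddCommGroup X] [NormedSpace ℝ X] [CompleteSpace X]
    (p : ℝ≥0∞) [Fact (1 ≤ p)]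
    (hiso : Nonempty (X ≃L[ℝ] lp (fun _ : ℕ => X) p))
    (hproj : ∀ P : X →L[ℝ] X, P ∘L P = P →
      ∃ Q : X →L[ℝ] X, Q ∘L Q = Q ∧
        Nonempty ((LinearMap.range (Q : X →ₗ[ℝ] X)) ≃L[ℝ] X) ∧
        (LinearMap.range (Q : X →ₗ[ℝ] X) ≤ LinearMap.range (P : X →ₗ[ℝ] X) ∨
          LinearMap.range (Q : X →ₗ[ℝ] X) ≤ LinearMap.range ((1 - P : X →L[ℝ] X) : X →ₗ[ℝ] X)))
    (P : X →L[ℝ] X) (hP : P ∘L P = P) :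
    Nonempty ((LinearMap.range (P : X →ₗ[ℝ] X)) ≃L[ℝ] X) ∨
      Nonempty ((LinearMap.range ((1 - P : X →L[ℝ] X) : X →ₗ[ℝ] X)) ≃L[ℝ] X) := by
  obtain ⟨Q, hQ, hQiso, hle | hle⟩ := hproj P hP
  · exact Or.inl (helper hiso P hP Q hQ hQiso hle)
  · exact Or.inr (helper hiso (1 - P) (idemCompl P hP) Q hQ hQiso hle)
end

section
/- Let E be a Banach space with a normalised 1-subsymmetric Schauder basis (e_t)_{t∈2^{<ω}} and let X = S^E (the completion of c₀₀(2^{<ω}) under ‖(a_t)‖ = sup over antichains A of ‖P_A (a_t)‖_E). If T = {s_t : t ∈ 2^{<ω}} is a subtree of 2^{<ω} linearly order-isomorphic to 2^{<ω}, then the operators B, Q : X → X defined by B x = Σ_t ⟨x, e_t*⟩ e_{s_t} and Q x = Σ_t ⟨x, e_{s_t}*⟩ e_t satisfy Q B = I_X and ‖B‖ = ‖Q‖ = 1. -/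
open scoped Classical in
/-- The `S^E` norm of a finitely supported vector: supremum over antichains `A` of the
`E`-norm `ν` of the coordinate projection onto `A`. -/
noncomputable def SNorm (ν : (List Bool →₀ ℝ) → ℝ) (a : List Bool →₀ ℝ) : ℝ :=
  ⨆ A : {A : Finset (List Bool) // IsAntichain (· <+: ·) (A : Set (List Bool))},
    ν (Finsupp.filter (· ∈ A.1) a)

/-- Let `ν` be the norm of a space `E` with a normalised 1-subsymmetric basis indexed by
the binary tree (expressed on finitely supported coordinate vectors: monotone in absolute
values = 1-unconditional, invariant under increasing rearrangements = 1-spreading, each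
unit vector of norm one), and let `σ` enumerate a subtree linearly order-isomorphic to
the binary tree.  Then in `X = S^E` the operators `B x = Σ ⟨x,e_t*⟩ e_{σ t}` and
`Q x = Σ ⟨x,e_{σ t}*⟩ e_t` satisfy `Q B = I` and `‖B‖ = ‖Q‖ = 1`: `B` is isometric for
the `S^E` norm and `Q` is contractive. -/
theorem stmt_10 (ν : (List Bool →₀ ℝ) → ℝ)
    (hmono : ∀ a b : List Bool →₀ ℝ, (∀ t, |a t| ≤ |b t|) → ν a ≤ ν b)
    (hspread : ∀ τ : List Bool → List Bool, (∀ s t, stdLt s t → stdLt (τ s) (τ t)) →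
      ∀ a : List Bool →₀ ℝ, ν (Finsupp.mapDomain τ a) = ν a)
    (hnormalised : ∀ t : List Bool, ν (Finsupp.single t 1) = 1)
    (hbdd : ∀ a : List Bool →₀ ℝ, BddAbove (Set.range fun
      A : {A : Finset (List Bool) // IsAntichain (· <+: ·) (A : Set (List Bool))} =>
        ν (Finsupp.filter (· ∈ A.1) a)))
    (σ : List Bool → List Bool) (hinj : Function.Injective σ)
    (hpre : ∀ s t : List Bool, σ s <+: σ t ↔ s <+: t)
    (hlin : ∀ s t : List Bool, stdLt s t ↔ stdLt (σ s) (σ t)) :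
    ∀ a : List Bool →₀ ℝ,
      Finsupp.comapDomain σ (Finsupp.mapDomain σ a) hinj.injOn = a ∧
      SNorm ν (Finsupp.mapDomain σ a) = SNorm ν a ∧
      SNorm ν (Finsupp.comapDomain σ a hinj.injOn) ≤ SNorm ν a := by
  classical
  have hσmono : ∀ s t, stdLt s t → stdLt (σ s) (σ t) := fun s t h => (hlin s t).mp h
  -- filter commutes with mapDomain
  have hfilt : ∀ (a : List Bool →₀ ℝ) (p : List Bool → Prop) [DecidablePred p],
      Finsupp.filter p (Finsupp.mapDomain σ a)
        = Finsupp.mapDomain σ (Finsupp.filter (fun t => p (σ t)) a) := by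
    intro a p _
    ext x
    by_cases hx : x ∈ Set.range σ
    · obtain ⟨t, rfl⟩ := hx
      rw [Finsupp.filter_apply, Finsupp.mapDomain_apply hinj,
        Finsupp.mapDomain_apply hinj, Finsupp.filter_apply]
    · rw [Finsupp.filter_apply, Finsupp.mapDomain_notin_range _ _ hx,
        Finsupp.mapDomain_notin_range _ _ hx]
      simp
  -- nonempty index type
  haveI : Nonempty {A : Finset (List Bool) // IsAntichain (· <+: ·) (A : Set (List Bool))} :=
    ⟨⟨∅, by simp [IsAntichain]⟩⟩
  -- SNorm equality for mapDomain
  have key : ∀ a : List Bool →₀ ℝ, SNorm ν (Finsupp.mapDomain σ a) = SNorm ν a := by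
    intro a
    apply le_antisymm
    · apply ciSup_le
      rintro ⟨A, hA⟩
      have hA' : IsAntichain (· <+: ·) ((A.preimage σ hinj.injOn : Finset (List Bool)) :
          Set (List Bool)) := by
        intro s hs t ht hst hle
        simp only [Finset.coe_preimage, Set.mem_preimage, Finset.mem_coe] at hs ht
        exact hA hs ht (fun h => hst (hinj h)) ((hpre s t).mpr hle)
      calc ν (Finsupp.filter (· ∈ A) (Finsupp.mapDomain σ a))
          = ν (Finsupp.mapDomain σ (Finsupp.filter (fun t => σ t ∈ A) a)) := by
            rw [hfilt]
        _ = ν (Finsupp.filter (fun t => σ t ∈ A) a) := hspread σ hσmono _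
        _ = ν (Finsupp.filter (· ∈ A.preimage σ hinj.injOn) a) := by
            congr 1
            ext t
            simp [Finsupp.filter_apply, Finset.mem_preimage]
        _ ≤ SNorm ν a := le_ciSup (hbdd a) ⟨A.preimage σ hinj.injOn, hA'⟩
    · apply ciSup_le
      rintro ⟨B, hB⟩
      have hB' : IsAntichain (· <+: ·) ((B.image σ : Finset (List Bool)) :
          Set (List Bool)) := by
        intro s hs t ht hst hle
        simp only [Finset.coe_image, Set.mem_image, Finset.mem_coe] at hs ht
        obtain ⟨u, hu, rfl⟩ := hs
        obtain ⟨v, hv, rfl⟩ := ht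
        exact hB hu hv (fun h => hst (by rw [h])) ((hpre u v).mp hle)
      calc ν (Finsupp.filter (· ∈ B) a)
          = ν (Finsupp.mapDomain σ (Finsupp.filter (· ∈ B) a)) :=
            (hspread σ hσmono _).symm
        _ = ν (Finsupp.filter (· ∈ B.image σ) (Finsupp.mapDomain σ a)) := by
            rw [hfilt]
            congr 2
            ext t
            rw [Finsupp.filter_apply, Finsupp.filter_apply]
            have h2 : σ t ∈ B.image σ ↔ t ∈ B := by
              simp only [Finset.mem_image]
              exact ⟨fun ⟨u, hu, hut⟩ => hinj hut ▸ hu, fun ht => ⟨t, ht, rfl⟩⟩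
            simp [h2]
        _ ≤ SNorm ν (Finsupp.mapDomain σ a) :=
            le_ciSup (hbdd _) ⟨B.image σ, hB'⟩
  intro a
  refine ⟨?_, key a, ?_⟩
  · ext t
    rw [Finsupp.comapDomain_apply, Finsupp.mapDomain_apply hinj]
  · rw [← key (Finsupp.comapDomain σ a hinj.injOn)]
    -- SNorm monotone under pointwise domination
    have hdom : ∀ t, |Finsupp.mapDomain σ (Finsupp.comapDomain σ a hinj.injOn) t| ≤ |a t| := by
      intro t
      by_cases ht : t ∈ Set.range σ
      · obtain ⟨u, rfl⟩ := ht
        rw [Finsupp.mapDomain_apply hinj, Finsupp.comapDomain_apply]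
      · rw [Finsupp.mapDomain_notin_range _ _ ht]
        simp [abs_nonneg]
    apply ciSup_le
    rintro ⟨A, hA⟩
    refine le_trans (hmono _ _ ?_) (le_ciSup (hbdd a) ⟨A, hA⟩)
    intro t
    rw [Finsupp.filter_apply, Finsupp.filter_apply]
    split
    · exact hdom t
    · simp
end

section
/- Let E be a Banach space with a normalised 1-subsymmetric Schauder basis indexed by 2^{<ω}, and let X = B^E (completion of c₀₀(2^{<ω}) under ‖(a_t)‖ = sup over branches Γ of ‖P_Γ(a_t)‖_E). If {s_t : t ∈ 2^{<ω}} is a subtree linearly order-isomorphic to 2^{<ω}, then (e_{s_t})_{t∈2^{<ω}} is 1-equivalent to the standard basis (e_t)_{t∈2^{<ω}} of B^E. -/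
/-- A branch: a maximal chain in the binary tree for the initial-segment order. -/
def IsBranch (B : Set (List Bool)) : Prop :=
  IsChain (· <+: ·) B ∧ ∀ C : Set (List Bool), IsChain (· <+: ·) C → B ⊆ C → B = C

open scoped Classical in
/-- The `B^E` norm of a finitely supported vector: supremum over branches `Γ` of the
`E`-norm `ν` of the coordinate projection onto `Γ`. -/
noncomputable def BNorm (ν : (List Bool →₀ ℝ) → ℝ) (a : List Bool →₀ ℝ) : ℝ :=
  ⨆ Γ : {Γ : Set (List Bool) // IsBranch Γ},
    ν (Finsupp.filter (· ∈ Γ.1) a)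

/-- Let `ν` be the norm of a space `E` with a normalised 1-subsymmetric basis indexed by
the binary tree, and let `σ` enumerate a subtree linearly order-isomorphic to the binary
tree. Then `(e_{σ t})` is 1-equivalent to the standard basis `(e_t)` of `B^E`:
`‖Σ a_t e_{σ t}‖_{B^E} = ‖Σ a_t e_t‖_{B^E}` for all finitely supported scalars. -/
theorem stmt_11 (ν : (List Bool →₀ ℝ) → ℝ)
    (hmono : ∀ a b : List Bool →₀ ℝ, (∀ t, |a t| ≤ |b t|) → ν a ≤ ν b)
    (hspread : ∀ τ : List Bool → List Bool, (∀ s t, stdLt s t → stdLt (τ s) (τ t)) →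
      ∀ a : List Bool →₀ ℝ, ν (Finsupp.mapDomain τ a) = ν a)
    (hnormalised : ∀ t : List Bool, ν (Finsupp.single t 1) = 1)
    (σ : List Bool → List Bool)
    (hpre : ∀ s t : List Bool, σ s <+: σ t ↔ s <+: t)
    (hlin : ∀ s t : List Bool, stdLt s t ↔ stdLt (σ s) (σ t)) :
    ∀ a : List Bool →₀ ℝ, BNorm ν (Finsupp.mapDomain σ a) = BNorm ν a := by
  classical
  have hσinj : Function.Injective σ := by
    intro s t h
    have h1 : s <+: t := (hpre s t).mp (h ▸ List.prefix_refl _)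
    have h2 : t <+: s := (hpre t s).mp (h ▸ List.prefix_refl _)
    exact List.IsPrefix.eq_of_length h1 (le_antisymm h1.length_le h2.length_le)
  -- filter commutes with mapDomain along an injective map
  have hfilter : ∀ (p : List Bool → Prop) (a : List Bool →₀ ℝ),
      Finsupp.filter p (Finsupp.mapDomain σ a)
        = Finsupp.mapDomain σ (Finsupp.filter (fun t => p (σ t)) a) := by
    intro p a
    ext s
    by_cases hs : s ∈ Set.range σ
    · obtain ⟨t, rfl⟩ := hs
      rw [Finsupp.filter_apply, Finsupp.mapDomain_apply hσinj,
        Finsupp.mapDomain_apply hσinj, Finsupp.filter_apply]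
    · rw [Finsupp.filter_apply, Finsupp.mapDomain_notin_range _ _ hs,
        Finsupp.mapDomain_notin_range _ _ hs]
      simp
  have hmonof : ∀ (p q : List Bool → Prop) (a : List Bool →₀ ℝ), (∀ t, p t → q t) →
      ν (Finsupp.filter p a) ≤ ν (Finsupp.filter q a) := by
    intro p q a hpq
    apply hmono
    intro t
    rw [Finsupp.filter_apply, Finsupp.filter_apply]
    by_cases h : p t
    · rw [if_pos h, if_pos (hpq t h)]
    · rw [if_neg h]
      simp
  have hBdd : ∀ b : List Bool →₀ ℝ,
      BddAbove (Set.range fun Γ : {Γ : Set (List Bool) // IsBranch Γ} =>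
        ν (Finsupp.filter (· ∈ Γ.1) b)) := by
    intro b
    refine ⟨ν b, ?_⟩
    rintro x ⟨Γ, rfl⟩
    apply hmono
    intro t
    rw [Finsupp.filter_apply]
    split <;> simp
  haveI : Nonempty {Γ : Set (List Bool) // IsBranch Γ} := by
    obtain ⟨c, hc, -⟩ := (IsChain.empty (r := (· <+: ·))).exists_maxChain
    exact ⟨⟨c, hc.1, fun C h1 h2 => hc.2 h1 h2⟩⟩
  intro a
  unfold BNorm
  apply le_antisymm
  · apply ciSup_le
    intro Γ'
    have hchain : IsChain (· <+: ·) (σ ⁻¹' Γ'.1) := by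
      intro s hs t ht hst
      rcases Γ'.2.1 hs ht (fun h => hst (hσinj h)) with h | h
      · exact Or.inl ((hpre s t).mp h)
      · exact Or.inr ((hpre t s).mp h)
    obtain ⟨Γ, hΓ, hsub⟩ := hchain.exists_maxChain
    refine le_ciSup_of_le (hBdd a) ⟨Γ, hΓ.1, fun C h1 h2 => hΓ.2 h1 h2⟩ ?_
    rw [hfilter, hspread σ (fun s t => (hlin s t).mp)]
    exact hmonof _ _ a (fun t ht => hsub ht)
  · apply ciSup_le
    intro Γ
    have hchain : IsChain (· <+: ·) (σ '' Γ.1) := by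
      rintro _ ⟨s, hs, rfl⟩ _ ⟨t, ht, rfl⟩ hst
      rcases Γ.2.1 hs ht (fun h => hst (congrArg σ h)) with h | h
      · exact Or.inl ((hpre s t).mpr h)
      · exact Or.inr ((hpre t s).mpr h)
    obtain ⟨Γ', hΓ', hsub⟩ := hchain.exists_maxChain
    refine le_ciSup_of_le (hBdd _) ⟨Γ', hΓ'.1, fun C h1 h2 => hΓ'.2 h1 h2⟩ ?_
    rw [hfilter, hspread σ (fun s t => (hlin s t).mp)]
    exact hmonof _ _ a (fun t ht => hsub ⟨t, ht, rfl⟩)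
end
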